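/- Any conventional higher-order logic built on CR containing a negation with ¬b ≠ b for booleans is inconsistent: there is a term Γ : bool with ⊢ Γ = ¬Γ. -/
import Mathlib


inductive Ty : Type
  | bool | unit | term
  | arrow : Ty → Ty → Ty
deriving DecidableEq

inductive Exp : Type
  | I : Ty → Exp
  | K : Ty → Ty → Exp
  | S : Ty → Ty → Ty → Exp
  | value : Ty → Exp
  | lift : Exp
  | neg : Exp
  | app : Exp
  | ap : Exp → Exp → Exp
  | quot : Exp → Exp
deriving DecidableEq

/-- Typing rules of Combinatory ReFLect (Figure 1). -/
inductive HasType : Exp → Ty → Prop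
  | I (σ) : HasType (.I σ) (.arrow σ σ)
  | K (σ τ) : HasType (.K σ τ) (.arrow σ (.arrow τ σ))
  | S (σ τ υ) : HasType (.S σ τ υ)
      (.arrow (.arrow σ (.arrow τ υ)) (.arrow (.arrow σ τ) (.arrow σ υ)))
  | value (σ) : HasType (.value σ) (.arrow .term σ)
  | lift : HasType .lift (.arrow .term .term)
  | neg : HasType .neg (.arrow .bool .bool)
  | app : HasType .app (.arrow .term (.arrow .term .term))
  | ap {e₁ e₂ σ τ} : HasType e₁ (.arrow σ τ) → HasType e₂ σ → HasType (.ap e₁ e₂) τ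
  | quot {e σ} : HasType e σ → HasType (.quot e) .term

/-- Single-step reduction of CR (Figure 2), closed under congruence. -/
inductive Step : Exp → Exp → Prop
  | I {σ e} : Step (.ap (.I σ) e) e
  | K {σ τ e₁ e₂} : Step (.ap (.ap (.K σ τ) e₁) e₂) e₁
  | S {σ τ υ e₁ e₂ e₃} :
      Step (.ap (.ap (.ap (.S σ τ υ) e₁) e₂) e₃) (.ap (.ap e₁ e₃) (.ap e₂ e₃))
  | value {σ e} : HasType e σ → Step (.ap (.value σ) (.quot e)) e
  | lift {s} : Step (.ap .lift (.quot s)) (.quot (.quot s))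
  | app {e₁ e₂ τ} : HasType (.ap e₁ e₂) τ →
      Step (.ap (.ap .app (.quot e₁)) (.quot e₂)) (.quot (.ap e₁ e₂))
  | apL {a a' b} : Step a a' → Step (.ap a b) (.ap a' b)
  | apR {a b b'} : Step b b' → Step (.ap a b) (.ap a b')

/-- Reflexive-transitive (congruent) closure of reduction. -/
def Reduces : Exp → Exp → Prop := Relation.ReflTransGen Step

/-- Reduction in one or more steps. -/
def ReducesPlus : Exp → Exp → Prop := Relation.TransGen Step

/-- f = S_{term,term,term} app lift -/
def fTerm : Exp := .ap (.ap (.S .term .term .term) .app) .lift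

/-- g = S (K value_term) (S (K f) I), with appropriate type subscripts. -/
def gTerm : Exp :=
  .ap (.ap (.S .term .term .term) (.ap (.K (.arrow .term .term) .term) (.value .term)))
      (.ap (.ap (.S .term .term .term) (.ap (.K (.arrow .term .term) .term) fTerm)) (.I .term))

/-- Provable equality in a conventional logic over CR: a congruent equivalence
containing the reduction rules. -/
inductive PEq : Exp → Exp → Prop
  | step {a b} : Step a b → PEq a b
  | refl (a) : PEq a a
  | symm {a b} : PEq a b → PEq b a
  | trans {a b c} : PEq a b → PEq b c → PEq a c
  | congr {a a' b b'} : PEq a a' → PEq b b' → PEq (.ap a b) (.ap a' b')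

/-- isfalse = S (K neg) (S (K value_bool) I) : term → bool -/
def psiE : Exp :=
  .ap (.ap (.S .term .bool .bool) (.ap (.K (.arrow .bool .bool) .term) .neg))
      (.ap (.ap (.S .term .term .bool) (.ap (.K (.arrow .term .bool) .term) (.value .bool)))
           (.I .term))

/-- h = S (K isfalse) f : term → bool -/
def hE : Exp :=
  .ap (.ap (.S .term .term .bool) (.ap (.K (.arrow .term .bool) .term) psiE)) fTerm

/-- Γ = h ⌜h⌝ -/
def gammaE : Exp := .ap hE (.quot hE)

theorem psiE_ty : HasType psiE (.arrow .term .bool) := by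
  refine .ap (.ap (.S _ _ _) (.ap (.K _ _) .neg)) (.ap (.ap (.S _ _ _) (.ap (.K _ _) (.value _))) (.I _))

theorem fTerm_ty : HasType fTerm (.arrow .term .term) :=
  .ap (.ap (.S _ _ _) .app) .lift

theorem hE_ty : HasType hE (.arrow .term .bool) :=
  .ap (.ap (.S _ _ _) (.ap (.K _ _) psiE_ty)) fTerm_ty

theorem gammaE_ty : HasType gammaE .bool := .ap hE_ty (.quot hE_ty)

theorem PEq.congrL {a a' b : Exp} (h : PEq a a') : PEq (.ap a b) (.ap a' b) :=
  PEq.congr h (PEq.refl b)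

theorem PEq.congrR {a b b' : Exp} (h : PEq b b') : PEq (.ap a b) (.ap a b') :=
  PEq.congr (PEq.refl a) h

theorem fTerm_diag : PEq (.ap fTerm (.quot hE)) (.quot gammaE) := by
  refine PEq.trans (PEq.step Step.S) ?_
  refine PEq.trans (PEq.congrR (PEq.step Step.lift)) ?_
  exact PEq.step (Step.app gammaE_ty)

theorem psi_gamma : PEq (.ap psiE (.quot gammaE)) (.ap .neg gammaE) := by
  refine PEq.trans (PEq.step Step.S) ?_
  refine PEq.trans (PEq.congrL (PEq.step Step.K)) ?_
  refine PEq.congrR ?_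
  refine PEq.trans (PEq.step Step.S) ?_
  refine PEq.trans (PEq.congrL (PEq.step Step.K)) ?_
  refine PEq.trans (PEq.congrR (PEq.step Step.I)) ?_
  exact PEq.step (Step.value gammaE_ty)

theorem gamma_key : PEq gammaE (.ap .neg gammaE) := by
  refine PEq.trans (PEq.step Step.S) ?_
  refine PEq.trans (PEq.congrL (PEq.step Step.K)) ?_
  refine PEq.trans (PEq.congrR fTerm_diag) ?_
  exact psi_gamma

/-- there is a Γ : bool provably equal to its own negation; hence
any logic in which no boolean term equals its own negation is inconsistent. -/
theorem cr_logic_inconsistent :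
    (∃ Γ : Exp, HasType Γ .bool ∧ PEq Γ (.ap .neg Γ)) ∧
    ((∀ b : Exp, HasType b .bool → ¬ PEq b (.ap .neg b)) → False) :=
  ⟨⟨gammaE, gammaE_ty, gamma_key⟩, fun h => h gammaE gammaE_ty gamma_key⟩
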